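/- arXiv:2205.09724 — 7 statements merged into one kernel-verified Lean document; each statement's English description precedes it below -/
import Mathlib

section
/- If b·γ > μ, then the point P₃ = ( a·μ/(b·γ − μ), a·α·γ·(b·γ·K − μ·(a + K))/(K·(b·γ − μ)²), 0 ) is an equilibrium of the tritrophic ODE system, i.e. the vector field vanishes at P₃. -/
/-- The right-hand side (vector field) of the tritrophic ODE system. -/
noncomputable def vectorField (α K a b c d γ μ ν β : ℝ) (p : Fin 3 → ℝ) : Fin 3 → ℝ :=
  ![α * p 0 * (1 - p 0 / K) - b * p 0 * p 1 / (p 0 + a),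
    γ * (b * p 0 * p 1 / (p 0 + a)) - c * p 1 * p 2 / (p 1 + d) - μ * p 1,
    β * (c * p 1 * p 2 / (p 1 + d)) - ν * p 2]

/-- If `bγ > μ`, the point
`P₃ = (aμ/(bγ-μ), aαγ(bγK - μ(a+K))/(K(bγ-μ)²), 0)` is an equilibrium of the
tritrophic ODE system: the vector field vanishes at `P₃`. -/
theorem P3_is_equilibrium
    (α K a b c d γ μ ν β : ℝ)
    (hα : 0 < α) (hK : 0 < K) (ha : 0 < a) (hb : 0 < b) (hc : 0 < c)
    (hd : 0 < d) (hγ : 0 < γ) (hμ : 0 < μ) (hν : 0 < ν) (hβ : 0 < β)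
    (hbγ : μ < b * γ) :
    vectorField α K a b c d γ μ ν β
      ![a * μ / (b * γ - μ),
        a * α * γ * (b * γ * K - μ * (a + K)) / (K * (b * γ - μ) ^ 2),
        0] = 0 := by
  have hsub : b * γ - μ ≠ 0 := sub_ne_zero.mpr (ne_of_gt hbγ)
  have hden : a * μ / (b * γ - μ) + a = a * (b * γ) / (b * γ - μ) := by
    field_simp; ring
  have habγ : a * (b * γ) ≠ 0 := by positivity
  funext i
  fin_cases i
  · show α * (a * μ / (b * γ - μ)) * (1 - a * μ / (b * γ - μ) / K) -
        b * (a * μ / (b * γ - μ)) *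
          (a * α * γ * (b * γ * K - μ * (a + K)) / (K * (b * γ - μ) ^ 2)) /
          (a * μ / (b * γ - μ) + a) = 0
    rw [hden]
    rw [div_div_eq_mul_div]
    field_simp
    ring
  · show γ * (b * (a * μ / (b * γ - μ)) *
          (a * α * γ * (b * γ * K - μ * (a + K)) / (K * (b * γ - μ) ^ 2)) /
          (a * μ / (b * γ - μ) + a)) -
        c * (a * α * γ * (b * γ * K - μ * (a + K)) / (K * (b * γ - μ) ^ 2)) * 0 /
          (a * α * γ * (b * γ * K - μ * (a + K)) / (K * (b * γ - μ) ^ 2) + d) -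
        μ * (a * α * γ * (b * γ * K - μ * (a + K)) / (K * (b * γ - μ) ^ 2)) = 0
    rw [hden, mul_zero, zero_div, sub_zero]
    rw [div_div_eq_mul_div]
    field_simp
    ring
  · show β * (c * (a * α * γ * (b * γ * K - μ * (a + K)) / (K * (b * γ - μ) ^ 2)) * 0 /
          (a * α * γ * (b * γ * K - μ * (a + K)) / (K * (b * γ - μ) ^ 2) + d)) -
        ν * 0 = 0
    simp
end

section
/- Let (u,v,w) : [0,T] → ℝ³ be a continuously differentiable solution of the tritrophic ODE system on [0,T] such that u(t) + a > 0 and v(t) + d > 0 for all t ∈ [0,T]. If u(0) ≥ 0, v(0) ≥ 0 and w(0) ≥ 0, then u(t) ≥ 0, v(t) ≥ 0 and w(t) ≥ 0 for all t ∈ [0,T]. -/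
/-!
Each equation of the system has the form `x' = r(t) x`, with a per-capita rate `r` that is
continuous on `[0, T]` because the denominators `u + a` and `v + d` stay positive there.
Hence `x(t) = x(0) exp (∫₀ᵗ r)`, which has the sign of `x(0)`.
-/

open Set Real

section LinearODE

variable {x g : ℝ → ℝ} {a b : ℝ}

lemma eq_mul_exp_integral_of_hasDerivAt_mul_of_continuous (hg : Continuous g)
    (hx : ∀ t ∈ Icc a b, HasDerivAt x (g t * x t) t) :
    ∀ t ∈ Icc a b, x t = x a * exp (∫ s in a..t, g s) := by
  set G : ℝ → ℝ := fun t => ∫ s in a..t, g s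
  have hG : ∀ t, HasDerivAt G (g t) t := fun t =>
    intervalIntegral.integral_hasDerivAt_right (hg.intervalIntegrable a t)
      (hg.stronglyMeasurableAtFilter _ _) hg.continuousAt
  have hy : ∀ t ∈ Icc a b, HasDerivAt (fun t => x t * exp (-G t)) 0 t := fun t ht =>
    ((hx t ht).mul (hG t).neg.exp).congr_deriv (by ring)
  have hconst := constant_of_has_deriv_right_zero
    (fun t ht => (hy t ht).continuousAt.continuousWithinAt)
    (fun t ht => (hy t (Ico_subset_Icc_self ht)).hasDerivWithinAt)
  intro t ht
  have h := hconst t ht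
  simp only [G, intervalIntegral.integral_same, neg_zero, exp_zero, mul_one] at h
  rw [← h, mul_assoc, ← exp_add, neg_add_cancel, exp_zero, mul_one]

lemma eq_mul_exp_integral_of_hasDerivAt_mul (hg : ContinuousOn g (Icc a b))
    (hx : ∀ t ∈ Icc a b, HasDerivAt x (g t * x t) t) :
    ∀ t ∈ Icc a b, x t = x a * exp (∫ s in a..t, g s) := by
  intro t ht
  have hab : a ≤ b := ht.1.trans ht.2
  set g' := IccExtend hab ((Icc a b).domRestrict g)
  have hg' : EqOn g' g (Icc a b) := fun s hs => IccExtend_of_mem hab _ hs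
  have hsol := eq_mul_exp_integral_of_hasDerivAt_mul_of_continuous (g := g')
    (continuous_IccExtend_iff.2 hg.domRestrict) (fun s hs => hg' hs ▸ hx s hs) t ht
  rwa [intervalIntegral.integral_congr (hg'.mono ?_)] at hsol
  rw [uIcc_of_le ht.1]
  exact Icc_subset_Icc_right ht.2

lemma nonneg_of_hasDerivAt_mul (hg : ContinuousOn g (Icc a b))
    (hx : ∀ t ∈ Icc a b, HasDerivAt x (g t * x t) t) (hxa : 0 ≤ x a) :
    ∀ t ∈ Icc a b, 0 ≤ x t := fun t ht => by
  rw [eq_mul_exp_integral_of_hasDerivAt_mul hg hx t ht]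
  positivity

end LinearODE

theorem solutions_stay_nonneg_general
    (α K a b c d γ μ ν β : ℝ)
    (T : ℝ)
    (u v w : ℝ → ℝ)
    (hu : ∀ t ∈ Set.Icc (0 : ℝ) T,
      HasDerivAt u (α * u t * (1 - u t / K) - b * u t * v t / (u t + a)) t)
    (hv : ∀ t ∈ Set.Icc (0 : ℝ) T,
      HasDerivAt v (γ * (b * u t * v t / (u t + a)) - c * v t * w t / (v t + d) - μ * v t) t)
    (hw : ∀ t ∈ Set.Icc (0 : ℝ) T,
      HasDerivAt w (β * (c * v t * w t / (v t + d)) - ν * w t) t)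
    (hua : ∀ t ∈ Set.Icc (0 : ℝ) T, 0 < u t + a)
    (hvd : ∀ t ∈ Set.Icc (0 : ℝ) T, 0 < v t + d)
    (hu0 : 0 ≤ u 0) (hv0 : 0 ≤ v 0) (hw0 : 0 ≤ w 0) :
    ∀ t ∈ Set.Icc (0 : ℝ) T, 0 ≤ u t ∧ 0 ≤ v t ∧ 0 ≤ w t := by
  have hu_cont : ContinuousOn u (Icc 0 T) := fun t ht => (hu t ht).continuousAt.continuousWithinAt
  have hv_cont : ContinuousOn v (Icc 0 T) := fun t ht => (hv t ht).continuousAt.continuousWithinAt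
  have hw_cont : ContinuousOn w (Icc 0 T) := fun t ht => (hw t ht).continuousAt.continuousWithinAt
  have hua' : ∀ t ∈ Icc (0 : ℝ) T, u t + a ≠ 0 := fun t ht => (hua t ht).ne'
  have hvd' : ∀ t ∈ Icc (0 : ℝ) T, v t + d ≠ 0 := fun t ht => (hvd t ht).ne'
  have hU := nonneg_of_hasDerivAt_mul (g := fun t => α * (1 - u t / K) - b * v t / (u t + a))
    (by fun_prop (disch := assumption))
    (fun t ht => (hu t ht).congr_deriv (by ring)) hu0
  have hV := nonneg_of_hasDerivAt_mul
    (g := fun t => γ * (b * u t / (u t + a)) - c * w t / (v t + d) - μ)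
    (by fun_prop (disch := assumption))
    (fun t ht => (hv t ht).congr_deriv (by ring)) hv0
  have hW := nonneg_of_hasDerivAt_mul (g := fun t => β * (c * v t / (v t + d)) - ν)
    (by fun_prop (disch := assumption))
    (fun t ht => (hw t ht).congr_deriv (by ring)) hw0
  exact fun t ht => ⟨hU t ht, hV t ht, hW t ht⟩

/-- Nonnegativity of solutions: if `(u,v,w)` is a continuously differentiable solution of
the tritrophic ODE system on `[0,T]` with `u(t)+a > 0` and `v(t)+d > 0` there, and the
initial data at `t = 0` are nonnegative, then `u, v, w` stay nonnegative on `[0,T]`. -/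
theorem solutions_stay_nonneg
    (α K a b c d γ μ ν β : ℝ)
    (hα : 0 < α) (hK : 0 < K) (ha : 0 < a) (hb : 0 < b) (hc : 0 < c)
    (hd : 0 < d) (hγ : 0 < γ) (hμ : 0 < μ) (hν : 0 < ν) (hβ : 0 < β)
    (T : ℝ) (hT : 0 ≤ T)
    (u v w : ℝ → ℝ)
    (hu : ∀ t ∈ Set.Icc (0 : ℝ) T,
      HasDerivAt u (α * u t * (1 - u t / K) - b * u t * v t / (u t + a)) t)
    (hv : ∀ t ∈ Set.Icc (0 : ℝ) T,
      HasDerivAt v (γ * (b * u t * v t / (u t + a)) - c * v t * w t / (v t + d) - μ * v t) t)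
    (hw : ∀ t ∈ Set.Icc (0 : ℝ) T,
      HasDerivAt w (β * (c * v t * w t / (v t + d)) - ν * w t) t)
    (hua : ∀ t ∈ Set.Icc (0 : ℝ) T, 0 < u t + a)
    (hvd : ∀ t ∈ Set.Icc (0 : ℝ) T, 0 < v t + d)
    (hu0 : 0 ≤ u 0) (hv0 : 0 ≤ v 0) (hw0 : 0 ≤ w 0) :
    ∀ t ∈ Set.Icc (0 : ℝ) T, 0 ≤ u t ∧ 0 ≤ v t ∧ 0 ≤ w t :=
  solutions_stay_nonneg_general α K a b c d γ μ ν β T u v w hu hv hw hua hvd hu0 hv0 hw0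
end

section
/- Let (u,v,w) : [0,∞) → ℝ³ be a continuously differentiable solution of the tritrophic ODE system with u(t) ≥ 0, v(t) ≥ 0, w(t) ≥ 0 for all t ≥ 0, let μ₀ = min(μ, ν) and K₀ = K·(α + μ₀)²/(4·α), and set W(t) = u(t) + v(t)/γ + w(t)/(γ·β). Then for every t ≥ 0, W(t) ≤ K₀/μ₀ + W(0)·exp(−μ₀·t); in particular every nonnegative solution is bounded. -/
/-!
The weights `1, 1/γ, 1/(γβ)` make the predation terms cancel in `W'`, leaving
`W' = αu(1 - u/K) - μ v/γ - ν w/(γβ)`. Since `v, w ≥ 0`, this gives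
`W' + μ₀ W ≤ αu(1 - u/K) + μ₀ u ≤ K₀`, where `K₀` is the maximum of this concave quadratic in `u`.
Grönwall's inequality with the negative rate `-μ₀` then yields the bound.
-/

open Real

theorem logistic_add_mul_le {α K : ℝ} (hα : 0 < α) (hK : 0 < K) (m x : ℝ) :
    α * x * (1 - x / K) + m * x ≤ K * (α + m) ^ 2 / (4 * α) := by
  have hgap : K * (α + m) ^ 2 / (4 * α) - (α * x * (1 - x / K) + m * x)
      = (2 * α * x - K * (α + m)) ^ 2 / (4 * α * K) := by
    field_simp
    ring
  have : 0 ≤ (2 * α * x - K * (α + m)) ^ 2 / (4 * α * K) := by positivity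
  linarith

theorem gronwallBound_neg_le {m ε : ℝ} (hm : 0 < m) (hε : 0 ≤ ε) (δ x : ℝ) :
    gronwallBound δ (-m) ε x ≤ ε / m + δ * exp (-m * x) := by
  rw [gronwallBound_of_K_ne_0 (neg_ne_zero.mpr hm.ne'), div_neg]
  have : 0 ≤ ε / m * exp (-m * x) := by positivity
  linarith

theorem le_gronwallBound_of_hasDerivAt {f f' : ℝ → ℝ} {K ε : ℝ}
    (hf : ∀ t, 0 ≤ t → HasDerivAt f (f' t) t) (bound : ∀ t, 0 ≤ t → f' t ≤ K * f t + ε)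
    {t : ℝ} (ht : 0 ≤ t) : f t ≤ gronwallBound (f 0) K ε t := by
  have := le_gronwallBound_of_liminf_deriv_right_le (a := 0) (b := t)
    (fun s hs => (hf s hs.1).continuousAt.continuousWithinAt)
    (fun s hs _ hr => (hf s hs.1).hasDerivWithinAt.liminf_right_slope_le hr)
    le_rfl (fun s hs => bound s hs.1) t ⟨ht, le_rfl⟩
  rwa [sub_zero] at this

theorem hasDerivAt_food_chain_weighted_sum {u v w : ℝ → ℝ} {t f p q γ β μ ν : ℝ}
    (hγ : γ ≠ 0) (hβ : β ≠ 0) (hu : HasDerivAt u (f - p) t)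
    (hv : HasDerivAt v (γ * p - q - μ * v t) t) (hw : HasDerivAt w (β * q - ν * w t) t) :
    HasDerivAt (fun s => u s + v s / γ + w s / (γ * β))
      (f - μ * (v t / γ) - ν * (w t / (γ * β))) t := by
  refine ((hu.add (hv.div_const γ)).add (hw.div_const (γ * β))).congr_deriv ?_
  field_simp
  ring

theorem weighted_biomass_bounded_general
    (α K a b c d γ μ ν β : ℝ)
    (hα : 0 < α) (hK : 0 < K)
    (hγ : 0 < γ) (hμ : 0 < μ) (hν : 0 < ν) (hβ : 0 < β)
    (u v w : ℝ → ℝ)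
    (hu : ∀ t : ℝ, 0 ≤ t →
      HasDerivAt u (α * u t * (1 - u t / K) - b * u t * v t / (u t + a)) t)
    (hv : ∀ t : ℝ, 0 ≤ t →
      HasDerivAt v (γ * (b * u t * v t / (u t + a)) - c * v t * w t / (v t + d) - μ * v t) t)
    (hw : ∀ t : ℝ, 0 ≤ t →
      HasDerivAt w (β * (c * v t * w t / (v t + d)) - ν * w t) t)
    (hvnn : ∀ t : ℝ, 0 ≤ t → 0 ≤ v t)
    (hwnn : ∀ t : ℝ, 0 ≤ t → 0 ≤ w t)
    (μ₀ K₀ : ℝ) (hμ₀ : μ₀ = min μ ν) (hK₀ : K₀ = K * (α + μ₀) ^ 2 / (4 * α))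
    (W : ℝ → ℝ) (hW : ∀ t, W t = u t + v t / γ + w t / (γ * β)) :
    ∀ t : ℝ, 0 ≤ t → W t ≤ K₀ / μ₀ + W 0 * Real.exp (-μ₀ * t) := by
  have hμ₀_pos : 0 < μ₀ := hμ₀ ▸ lt_min hμ hν
  have hW_deriv : ∀ t, 0 ≤ t → HasDerivAt W
      (α * u t * (1 - u t / K) - μ * (v t / γ) - ν * (w t / (γ * β))) t := fun t ht =>
    funext hW ▸ hasDerivAt_food_chain_weighted_sum hγ.ne' hβ.ne' (hu t ht) (hv t ht) (hw t ht)
  have hW_bound : ∀ t, 0 ≤ t →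
      α * u t * (1 - u t / K) - μ * (v t / γ) - ν * (w t / (γ * β)) ≤ -μ₀ * W t + K₀ := by
    intro t ht
    have hv_loss : μ₀ * (v t / γ) ≤ μ * (v t / γ) :=
      mul_le_mul_of_nonneg_right (hμ₀ ▸ min_le_left μ ν) (div_nonneg (hvnn t ht) hγ.le)
    have hw_loss : μ₀ * (w t / (γ * β)) ≤ ν * (w t / (γ * β)) :=
      mul_le_mul_of_nonneg_right (hμ₀ ▸ min_le_right μ ν) (by have := hwnn t ht; positivity)
    have hprey := logistic_add_mul_le hα hK μ₀ (u t)
    rw [hW t]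
    linarith
  intro t ht
  calc W t ≤ gronwallBound (W 0) (-μ₀) K₀ t := le_gronwallBound_of_hasDerivAt hW_deriv hW_bound ht
    _ ≤ K₀ / μ₀ + W 0 * exp (-μ₀ * t) := gronwallBound_neg_le hμ₀_pos (hK₀ ▸ by positivity) _ _

/-- Boundedness of nonnegative solutions: if `(u,v,w)` is a continuously differentiable
nonnegative solution of the tritrophic system on `[0,∞)`, then with `μ₀ = min μ ν`,
`K₀ = K(α+μ₀)²/(4α)` and `W = u + v/γ + w/(γβ)` one has
`W(t) ≤ K₀/μ₀ + W(0)·exp(-μ₀ t)` for all `t ≥ 0`; in particular every nonnegative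
solution is bounded. -/
theorem weighted_biomass_bounded
    (α K a b c d γ μ ν β : ℝ)
    (hα : 0 < α) (hK : 0 < K) (ha : 0 < a) (hb : 0 < b) (hc : 0 < c)
    (hd : 0 < d) (hγ : 0 < γ) (hμ : 0 < μ) (hν : 0 < ν) (hβ : 0 < β)
    (u v w : ℝ → ℝ)
    (hu : ∀ t : ℝ, 0 ≤ t →
      HasDerivAt u (α * u t * (1 - u t / K) - b * u t * v t / (u t + a)) t)
    (hv : ∀ t : ℝ, 0 ≤ t →
      HasDerivAt v (γ * (b * u t * v t / (u t + a)) - c * v t * w t / (v t + d) - μ * v t) t)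
    (hw : ∀ t : ℝ, 0 ≤ t →
      HasDerivAt w (β * (c * v t * w t / (v t + d)) - ν * w t) t)
    (hunn : ∀ t : ℝ, 0 ≤ t → 0 ≤ u t)
    (hvnn : ∀ t : ℝ, 0 ≤ t → 0 ≤ v t)
    (hwnn : ∀ t : ℝ, 0 ≤ t → 0 ≤ w t)
    (μ₀ K₀ : ℝ) (hμ₀ : μ₀ = min μ ν) (hK₀ : K₀ = K * (α + μ₀) ^ 2 / (4 * α))
    (W : ℝ → ℝ) (hW : ∀ t, W t = u t + v t / γ + w t / (γ * β)) :
    ∀ t : ℝ, 0 ≤ t → W t ≤ K₀ / μ₀ + W 0 * Real.exp (-μ₀ * t) :=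
  weighted_biomass_bounded_general α K a b c d γ μ ν β hα hK hγ hμ hν hβ u v w hu hv hw hvnn hwnn μ₀
    K₀ hμ₀ hK₀ W hW
end

section
/- Suppose b·γ < μ. Let (u,v,w) : [0,∞) → ℝ³ be a continuously differentiable solution of the tritrophic ODE system with u(t) ≥ 0, v(t) ≥ 0, w(t) ≥ 0 for all t ≥ 0. Then v(t) ≤ v(0)·exp(−(μ − b·γ)·t) for all t ≥ 0; in particular v(t) → 0 as t → ∞ (the mesopredator vanishes). -/
/-!
Dropping the (nonnegative) predation loss of the mesopredator and bounding its saturating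
Holling II gain `b u/(u + a) ≤ b` gives the linear differential inequality
`v' ≤ -(μ - bγ) v`, so Grönwall's inequality yields exponential decay of `v`.
-/

open Real Filter Set Topology

theorem le_mul_exp_of_hasDerivAt_of_deriv_le_mul {f f' : ℝ → ℝ} {K : ℝ}
    (hf : ∀ t, 0 ≤ t → HasDerivAt f (f' t) t) (bound : ∀ t, 0 ≤ t → f' t ≤ K * f t)
    {t : ℝ} (ht : 0 ≤ t) : f t ≤ f 0 * exp (K * t) := by
  have hcont : ContinuousOn f (Icc 0 t) := fun x hx => (hf x hx.1).continuousAt.continuousWithinAt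
  have hslope : ∀ x ∈ Ico 0 t, ∀ r, f' x < r →
      ∃ᶠ z in 𝓝[>] x, (z - x)⁻¹ * (f z - f x) < r := fun x hx _ hr =>
    (hf x hx.1).hasDerivWithinAt.liminf_right_slope_le hr
  have := le_gronwallBound_of_liminf_deriv_right_le (K := K) (ε := 0) hcont hslope le_rfl
    (fun x hx => (bound x hx.1).trans_eq (add_zero _).symm) t ⟨ht, le_rfl⟩
  rwa [gronwallBound_ε0, sub_zero] at this

theorem holling_mul_le {a b u v : ℝ} (ha : 0 < a) (hb : 0 ≤ b) (hu : 0 ≤ u) (hv : 0 ≤ v) :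
    b * u * v / (u + a) ≤ b * v := by
  rw [div_le_iff₀ (by linarith)]
  nlinarith [mul_nonneg (mul_nonneg hb hv) ha.le]

theorem mesopredator_rate_le {a b c d γ μ u v w : ℝ} (ha : 0 < a) (hb : 0 ≤ b) (hc : 0 ≤ c)
    (hd : 0 ≤ d) (hγ : 0 ≤ γ) (hu : 0 ≤ u) (hv : 0 ≤ v) (hw : 0 ≤ w) :
    γ * (b * u * v / (u + a)) - c * v * w / (v + d) - μ * v ≤ -(μ - b * γ) * v := by
  have gain : γ * (b * u * v / (u + a)) ≤ γ * (b * v) :=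
    mul_le_mul_of_nonneg_left (holling_mul_le ha hb hu hv) hγ
  have loss : 0 ≤ c * v * w / (v + d) := by positivity
  linarith

theorem tendsto_zero_of_nonneg_of_le_mul_exp {f : ℝ → ℝ} {C k : ℝ} (hk : 0 < k)
    (hf : ∀ t, 0 ≤ t → 0 ≤ f t) (hle : ∀ t, 0 ≤ t → f t ≤ C * exp (-k * t)) :
    Tendsto f atTop (𝓝 0) := by
  have hexp : Tendsto (fun t => C * exp (-k * t)) atTop (𝓝 0) := by
    simpa using (tendsto_exp_atBot.comp
      (tendsto_id.const_mul_atTop_of_neg (neg_neg_of_pos hk))).const_mul C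
  exact tendsto_of_tendsto_of_tendsto_of_le_of_le' tendsto_const_nhds hexp
    (eventually_ge_atTop 0 |>.mono hf) (eventually_ge_atTop 0 |>.mono hle)

theorem mesopredator_vanishes_general
    (a b c d γ μ : ℝ)
    (ha : 0 < a) (hb : 0 < b) (hc : 0 < c)
    (hd : 0 < d) (hγ : 0 < γ)
    (hbγμ : b * γ < μ)
    (u v w : ℝ → ℝ)
    (hv : ∀ t : ℝ, 0 ≤ t →
      HasDerivAt v (γ * (b * u t * v t / (u t + a)) - c * v t * w t / (v t + d) - μ * v t) t)
    (hunn : ∀ t : ℝ, 0 ≤ t → 0 ≤ u t)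
    (hvnn : ∀ t : ℝ, 0 ≤ t → 0 ≤ v t)
    (hwnn : ∀ t : ℝ, 0 ≤ t → 0 ≤ w t) :
    (∀ t : ℝ, 0 ≤ t → v t ≤ v 0 * Real.exp (-(μ - b * γ) * t)) ∧
    Filter.Tendsto v Filter.atTop (nhds 0) := by
  have decay : ∀ t : ℝ, 0 ≤ t → v t ≤ v 0 * exp (-(μ - b * γ) * t) := fun t ht =>
    le_mul_exp_of_hasDerivAt_of_deriv_le_mul hv (fun s hs => mesopredator_rate_le ha hb.le
      hc.le hd.le hγ.le (hunn s hs) (hvnn s hs) (hwnn s hs)) ht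
  exact ⟨decay, tendsto_zero_of_nonneg_of_le_mul_exp (sub_pos.2 hbγμ) hvnn decay⟩

/-- If `bγ < μ`, the mesopredator vanishes: for any continuously differentiable
nonnegative solution of the tritrophic system on `[0,∞)`,
`v(t) ≤ v(0)·exp(-(μ - bγ)t)` for all `t ≥ 0`, and `v(t) → 0` as `t → ∞`. -/
theorem mesopredator_vanishes
    (α K a b c d γ μ ν β : ℝ)
    (hα : 0 < α) (hK : 0 < K) (ha : 0 < a) (hb : 0 < b) (hc : 0 < c)
    (hd : 0 < d) (hγ : 0 < γ) (hμ : 0 < μ) (hν : 0 < ν) (hβ : 0 < β)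
    (hbγμ : b * γ < μ)
    (u v w : ℝ → ℝ)
    (hu : ∀ t : ℝ, 0 ≤ t →
      HasDerivAt u (α * u t * (1 - u t / K) - b * u t * v t / (u t + a)) t)
    (hv : ∀ t : ℝ, 0 ≤ t →
      HasDerivAt v (γ * (b * u t * v t / (u t + a)) - c * v t * w t / (v t + d) - μ * v t) t)
    (hw : ∀ t : ℝ, 0 ≤ t →
      HasDerivAt w (β * (c * v t * w t / (v t + d)) - ν * w t) t)
    (hunn : ∀ t : ℝ, 0 ≤ t → 0 ≤ u t)
    (hvnn : ∀ t : ℝ, 0 ≤ t → 0 ≤ v t)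
    (hwnn : ∀ t : ℝ, 0 ≤ t → 0 ≤ w t) :
    (∀ t : ℝ, 0 ≤ t → v t ≤ v 0 * Real.exp (-(μ - b * γ) * t)) ∧
    Filter.Tendsto v Filter.atTop (nhds 0) :=
  mesopredator_vanishes_general a b c d γ μ ha hb hc hd hγ hbγμ u v w hv hunn hvnn hwnn
end

section
/- Suppose β·c < ν. Let (u,v,w) : [0,∞) → ℝ³ be a continuously differentiable solution of the tritrophic ODE system with u(t) ≥ 0, v(t) ≥ 0, w(t) ≥ 0 for all t ≥ 0. Then w(t) ≤ w(0)·exp(−(ν − β·c)·t) for all t ≥ 0; in particular w(t) → 0 as t → ∞ (the top predator vanishes). -/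
/-!
The Holling type II predation rate `c v / (v + d)` never exceeds its saturation value `c`, so the
top predator grows at rate at most `β c` while dying at rate `ν`; hence
`w' ≤ -(ν - β c) w`, and the integrating factor `exp ((ν - β c) t)` turns this into exponential
decay.
-/

open Real Filter Topology Set

theorem le_mul_exp_of_hasDerivAt_le_neg_mul {f f' : ℝ → ℝ} {k : ℝ}
    (hf : ∀ t, 0 ≤ t → HasDerivAt f (f' t) t) (hf' : ∀ t, 0 ≤ t → f' t ≤ -k * f t)
    {t : ℝ} (ht : 0 ≤ t) : f t ≤ f 0 * exp (-k * t) := by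
  set g : ℝ → ℝ := fun s => f s * exp (k * s)
  have hg : ∀ s, 0 ≤ s → HasDerivAt g ((f' s + k * f s) * exp (k * s)) s := fun s hs =>
    ((hf s hs).mul ((hasDerivAt_id' s).const_mul k).exp).congr_deriv (by ring)
  have hg_anti : AntitoneOn g (Ici 0) := by
    refine antitoneOn_of_hasDerivWithinAt_nonpos (convex_Ici 0)
      (fun s hs => (hg s hs).continuousAt.continuousWithinAt)
      (fun s hs => (hg s (interior_subset hs)).hasDerivWithinAt) fun s hs => ?_
    have hs₀ : 0 ≤ s := interior_subset hs
    exact mul_nonpos_of_nonpos_of_nonneg (by linarith [hf' s hs₀]) (exp_pos _).le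
  calc f t
      = g t * exp (-k * t) := by simp only [g, mul_assoc, ← exp_add, neg_mul, add_neg_cancel,
        exp_zero, mul_one]
    _ ≤ g 0 * exp (-k * t) := by
      gcongr
      exact hg_anti self_mem_Ici ht ht
    _ = f 0 * exp (-k * t) := by simp [g]

theorem tendsto_zero_of_nonneg_of_le_mul_exp_neg {f : ℝ → ℝ} {C k : ℝ} (hk : 0 < k)
    (hf₀ : ∀ t, 0 ≤ t → 0 ≤ f t) (hf : ∀ t, 0 ≤ t → f t ≤ C * exp (-k * t)) :
    Tendsto f atTop (𝓝 0) := by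
  have hexp : Tendsto (fun t => C * exp (-k * t)) atTop (𝓝 0) := by
    simpa using ((tendsto_exp_atBot.comp
      (tendsto_id.const_mul_atTop_of_neg (neg_neg_of_pos hk))).const_mul C)
  exact tendsto_of_tendsto_of_tendsto_of_le_of_le' tendsto_const_nhds hexp
    (eventually_ge_atTop 0 |>.mono hf₀) (eventually_ge_atTop 0 |>.mono hf)

theorem holling_predator_growth_le {β c d ν v w : ℝ} (hβ : 0 ≤ β) (hc : 0 ≤ c) (hd : 0 < d)
    (hv : 0 ≤ v) (hw : 0 ≤ w) : β * (c * v * w / (v + d)) - ν * w ≤ -(ν - β * c) * w := by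
  have hsat : c * v * w / (v + d) ≤ c * w := by
    rw [div_le_iff₀ (by positivity)]
    nlinarith [mul_nonneg (mul_nonneg hc hw) hd.le]
  nlinarith [mul_le_mul_of_nonneg_left hsat hβ]

theorem top_predator_vanishes_general
    (c d ν β : ℝ)
    (hc : 0 < c)
    (hd : 0 < d) (hβ : 0 < β)
    (hβcν : β * c < ν)
    (v w : ℝ → ℝ)
    (hw : ∀ t : ℝ, 0 ≤ t →
      HasDerivAt w (β * (c * v t * w t / (v t + d)) - ν * w t) t)
    (hvnn : ∀ t : ℝ, 0 ≤ t → 0 ≤ v t)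
    (hwnn : ∀ t : ℝ, 0 ≤ t → 0 ≤ w t) :
    (∀ t : ℝ, 0 ≤ t → w t ≤ w 0 * Real.exp (-(ν - β * c) * t)) ∧
    Filter.Tendsto w Filter.atTop (nhds 0) := by
  have hdecay : ∀ t : ℝ, 0 ≤ t → w t ≤ w 0 * Real.exp (-(ν - β * c) * t) :=
    fun t ht => le_mul_exp_of_hasDerivAt_le_neg_mul hw
      (fun s hs => holling_predator_growth_le hβ.le hc.le hd (hvnn s hs) (hwnn s hs)) ht
  exact ⟨hdecay, tendsto_zero_of_nonneg_of_le_mul_exp_neg (sub_pos.mpr hβcν) hwnn hdecay⟩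

/-- If `βc < ν`, the top predator vanishes: for any continuously differentiable
nonnegative solution of the tritrophic system on `[0,∞)`,
`w(t) ≤ w(0)·exp(-(ν - βc)t)` for all `t ≥ 0`, and `w(t) → 0` as `t → ∞`. -/
theorem top_predator_vanishes
    (α K a b c d γ μ ν β : ℝ)
    (hα : 0 < α) (hK : 0 < K) (ha : 0 < a) (hb : 0 < b) (hc : 0 < c)
    (hd : 0 < d) (hγ : 0 < γ) (hμ : 0 < μ) (hν : 0 < ν) (hβ : 0 < β)
    (hβcν : β * c < ν)
    (u v w : ℝ → ℝ)
    (hu : ∀ t : ℝ, 0 ≤ t →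
      HasDerivAt u (α * u t * (1 - u t / K) - b * u t * v t / (u t + a)) t)
    (hv : ∀ t : ℝ, 0 ≤ t →
      HasDerivAt v (γ * (b * u t * v t / (u t + a)) - c * v t * w t / (v t + d) - μ * v t) t)
    (hw : ∀ t : ℝ, 0 ≤ t →
      HasDerivAt w (β * (c * v t * w t / (v t + d)) - ν * w t) t)
    (hunn : ∀ t : ℝ, 0 ≤ t → 0 ≤ u t)
    (hvnn : ∀ t : ℝ, 0 ≤ t → 0 ≤ v t)
    (hwnn : ∀ t : ℝ, 0 ≤ t → 0 ≤ w t) :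
    (∀ t : ℝ, 0 ≤ t → w t ≤ w 0 * Real.exp (-(ν - β * c) * t)) ∧
    Filter.Tendsto w Filter.atTop (nhds 0) :=
  top_predator_vanishes_general c d ν β hc hd hβ hβcν v w hw hvnn hwnn
end

section
/- Assume b·K·γ − a·μ − K·μ < 0. Let μᵢ ≥ 0 and χ be real numbers, d₀, d₁, d₂ > 0, and let A = [[d₀, 0, 0], [0, d₁, 0], [0, −χ, d₂]] and J₁ = [[−α, −b·K/(a + K), 0], [0, b·K·γ/(a + K) − μ, 0], [0, 0, −ν]]. Then every eigenvalue λ of the matrix J₁ − μᵢ·A is real and satisfies λ ≤ −min(α, μ − b·K·γ/(a + K), ν) < 0. -/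
/-- Spectral estimate for the linearization at the semitrivial steady state `(K,0,0)` of
the reaction–diffusion–chemotaxis system: if `bKγ - aμ - Kμ < 0`, then every
(complex) eigenvalue `z` of `J₁ - μᵢ·A` is real and satisfies
`z ≤ -min(α, μ - bKγ/(a+K), ν) < 0`. -/
theorem diffusive_jacobian_spectrum_negative
    (α K a b γ μ ν : ℝ)
    (hα : 0 < α) (hK : 0 < K) (ha : 0 < a) (hb : 0 < b)
    (hγ : 0 < γ) (hμ : 0 < μ) (hν : 0 < ν)
    (hstab : b * K * γ - a * μ - K * μ < 0)
    (μi χ d₀ d₁ d₂ : ℝ) (hμi : 0 ≤ μi)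
    (hd₀ : 0 < d₀) (hd₁ : 0 < d₁) (hd₂ : 0 < d₂)
    (A J₁ : Matrix (Fin 3) (Fin 3) ℝ)
    (hA : A = !![d₀, 0, 0; 0, d₁, 0; 0, -χ, d₂])
    (hJ₁ : J₁ = !![-α, -b * K / (a + K), 0;
                   0, b * K * γ / (a + K) - μ, 0;
                   0, 0, -ν]) :
    (-min α (min (μ - b * K * γ / (a + K)) ν) < 0) ∧
    ∀ z : ℂ,
      (((J₁ - μi • A).map ((↑) : ℝ → ℂ)) - z • (1 : Matrix (Fin 3) (Fin 3) ℂ)).det = 0 →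
      z.im = 0 ∧ z.re ≤ -min α (min (μ - b * K * γ / (a + K)) ν) := by
  subst hA hJ₁
  have haK : 0 < a + K := by linarith
  have hs : b * K * γ / (a + K) < μ := by
    rw [div_lt_iff₀ haK]; nlinarith
  have hmin : 0 < min α (min (μ - b * K * γ / (a + K)) ν) := by
    simp only [lt_min_iff]
    exact ⟨hα, by linarith, hν⟩
  refine ⟨by linarith, ?_⟩
  intro z hz
  set m := min α (min (μ - b * K * γ / (a + K)) ν) with hm
  have hdet : ((((!![-α, -b * K / (a + K), 0;
                   0, b * K * γ / (a + K) - μ, 0;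
                   0, 0, -ν] : Matrix (Fin 3) (Fin 3) ℝ)
        - μi • !![d₀, 0, 0; 0, d₁, 0; 0, -χ, d₂]).map ((↑) : ℝ → ℂ))
        - z • (1 : Matrix (Fin 3) (Fin 3) ℂ)).det
      = (((-α - μi * d₀ : ℝ) : ℂ) - z)
        * (((b * K * γ / (a + K) - μ - μi * d₁ : ℝ) : ℂ) - z)
        * (((-ν - μi * d₂ : ℝ) : ℂ) - z) := by
    simp [Matrix.det_fin_three, Matrix.sub_apply, Matrix.smul_apply, Matrix.map_apply,
      Matrix.one_apply]
  rw [hdet] at hz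
  have key : ∀ r : ℝ, ((r : ℂ) - z = 0) → r ≤ -m → z.im = 0 ∧ z.re ≤ -m := by
    intro r h hr
    have : z = (r : ℂ) := by linear_combination -h
    subst this
    simpa using hr
  rcases mul_eq_zero.mp hz with h | h
  · rcases mul_eq_zero.mp h with h | h
    · refine key _ h ?_
      have : m ≤ α := min_le_left _ _
      nlinarith
    · refine key _ h ?_
      have : m ≤ μ - b * K * γ / (a + K) := le_trans (min_le_right _ _) (min_le_left _ _)
      nlinarith
  · refine key _ h ?_
    have : m ≤ ν := le_trans (min_le_right _ _) (min_le_right _ _)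
    nlinarith
end

section
/- Assume b·γ > μ, b·K·γ − a·μ − K·μ > 0, and a·b·γ > b·K·γ − a·μ − K·μ, and let u₃ = a·μ/(b·γ − μ) and v₃ = a·α·γ·(b·γ·K − μ·(a + K))/(K·(b·γ − μ)²). Then the 2×2 Jacobian matrix at (u₃, v₃) of the planar predator–prey subsystem u' = α·u·(1 − u/K) − b·u·v/(u + a), v' = γ·b·u·v/(u + a) − μ·v has negative trace and positive determinant; consequently both of its (complex) eigenvalues have negative real part, i.e. (u₃, v₃) is a linearly asymptotically stable equilibrium of the planar subsystem. -/
/-- The planar predator–prey subsystem obtained by setting `w = 0` in the tritrophic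
system: `u' = αu(1 - u/K) - buv/(u+a)`, `v' = γbuv/(u+a) - μv`. -/
noncomputable def planarField (α K a b γ μ : ℝ) (p : Fin 2 → ℝ) : Fin 2 → ℝ :=
  ![α * p 0 * (1 - p 0 / K) - b * p 0 * p 1 / (p 0 + a),
    γ * (b * p 0 * p 1 / (p 0 + a)) - μ * p 1]

/-- The Jacobian matrix of a vector field on ℝ². -/
noncomputable def jacobian2 (Φ : (Fin 2 → ℝ) → Fin 2 → ℝ) (p : Fin 2 → ℝ) :
    Matrix (Fin 2) (Fin 2) ℝ :=
  Matrix.of fun i j => deriv (fun s => Φ (Function.update p j s) i) (p j)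

/-!
At the coexistence equilibrium the predator's per-capita growth vanishes, `γ b u₃ / (u₃ + a) = μ`,
so the Jacobian there is `!![T, -μ/γ; γ c, 0]` with `c = a b v₃ / (u₃ + a)² > 0`. Hence its
determinant is `μ c > 0`, and its trace simplifies to
`T = α μ ((b K γ - a μ - K μ) - a b γ) / (K b γ (b γ - μ)) < 0`. A root of
`z² - T z + D` with `T < 0 < D` has negative real part: a non-real root has real part `T / 2`,
and a real root cannot be `≥ 0` because then `z² - T z + D > 0`.
-/

theorem Matrix.det_map_ofReal_sub_smul_one_fin_two (M : Matrix (Fin 2) (Fin 2) ℝ) (z : ℂ) :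
    ((M.map ((↑) : ℝ → ℂ)) - z • (1 : Matrix (Fin 2) (Fin 2) ℂ)).det =
      z ^ 2 - M.trace * z + M.det := by
  simp only [Matrix.det_fin_two, Matrix.trace_fin_two, Matrix.sub_apply, Matrix.map_apply,
    Matrix.smul_apply, Matrix.one_apply_eq, Matrix.one_apply_ne (by decide : (0 : Fin 2) ≠ 1),
    Matrix.one_apply_ne (by decide : (1 : Fin 2) ≠ 0), smul_eq_mul]
  push_cast
  ring

theorem Complex.re_neg_of_sq_sub_mul_add_eq_zero {T D : ℝ} (hT : T < 0) (hD : 0 < D) {z : ℂ}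
    (hz : z ^ 2 - T * z + D = 0) : z.re < 0 := by
  have hre : z.re ^ 2 - z.im ^ 2 - T * z.re + D = 0 := by
    simpa [sq] using congrArg Complex.re hz
  have him : z.im * (2 * z.re - T) = 0 := by
    have h := congrArg Complex.im hz
    simp only [sq, Complex.sub_im, Complex.add_im, Complex.mul_im, Complex.ofReal_re,
      Complex.ofReal_im, Complex.zero_im] at h
    linear_combination h
  by_contra! hx
  have him0 : z.im = 0 := (mul_eq_zero.mp him).resolve_right (by linarith)
  nlinarith

theorem Matrix.re_neg_of_det_map_ofReal_sub_smul_one_eq_zero {M : Matrix (Fin 2) (Fin 2) ℝ}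
    (hT : M.trace < 0) (hD : 0 < M.det) {z : ℂ}
    (hz : ((M.map ((↑) : ℝ → ℂ)) - z • (1 : Matrix (Fin 2) (Fin 2) ℂ)).det = 0) : z.re < 0 :=
  Complex.re_neg_of_sq_sub_mul_add_eq_zero hT hD
    (by rwa [M.det_map_ofReal_sub_smul_one_fin_two] at hz)

theorem jacobian2_vec2 (Φ : (Fin 2 → ℝ) → Fin 2 → ℝ) (x y : ℝ) :
    jacobian2 Φ ![x, y] =
      !![deriv (fun s => Φ ![s, y] 0) x, deriv (fun s => Φ ![x, s] 0) y;
         deriv (fun s => Φ ![s, y] 1) x, deriv (fun s => Φ ![x, s] 1) y] := by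
  have h0 : ∀ s, Function.update ![x, y] 0 s = ![s, y] := fun s => by
    ext i; fin_cases i <;> rfl
  have h1 : ∀ s, Function.update ![x, y] 1 s = ![x, s] := fun s => by
    ext i; fin_cases i <;> rfl
  ext i j
  fin_cases i <;> fin_cases j <;> simp [jacobian2, h0, h1]

theorem hasDerivAt_predation (b v : ℝ) {a u : ℝ} (hua : u + a ≠ 0) :
    HasDerivAt (fun s => b * s * v / (s + a)) (a * b * v / (u + a) ^ 2) u :=
  ((((hasDerivAt_id' u).const_mul b).mul_const v).fun_div
    ((hasDerivAt_id' u).add_const a) hua).congr_deriv (by ring)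

theorem hasDerivAt_logistic (α K u : ℝ) :
    HasDerivAt (fun s => α * s * (1 - s / K)) (α * (1 - 2 * u / K)) u :=
  (((hasDerivAt_id' u).const_mul α).fun_mul
    ((hasDerivAt_const u 1).fun_sub ((hasDerivAt_id' u).div_const K))).congr_deriv (by ring)

theorem jacobian2_planarField {α K a b γ μ u v : ℝ} (hua : u + a ≠ 0) :
    jacobian2 (planarField α K a b γ μ) ![u, v] =
      !![α * (1 - 2 * u / K) - a * b * v / (u + a) ^ 2, -(b * u / (u + a));
         γ * (a * b * v / (u + a) ^ 2), γ * (b * u / (u + a)) - μ] := by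
  have hprey : HasDerivAt (fun s => b * u * s / (u + a)) (b * u / (u + a)) v :=
    (hasDerivAt_const_mul (b * u)).div_const (u + a)
  have h00 := (hasDerivAt_logistic α K u).fun_sub (hasDerivAt_predation b v hua)
  have h01 := (hasDerivAt_const v (α * u * (1 - u / K))).fun_sub hprey
  have h10 := ((hasDerivAt_predation b v hua).const_mul γ).sub_const (μ * v)
  have h11 := (hprey.const_mul γ).fun_sub (hasDerivAt_const_mul μ)
  rw [jacobian2_vec2]
  simp only [planarField, Matrix.cons_val_zero, Matrix.cons_val_one]
  rw [h00.deriv, h01.deriv, h10.deriv, h11.deriv, zero_sub]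

section equilibrium

variable {α K a b γ μ u₃ v₃ : ℝ}

theorem prey_add_at_equilibrium (hD : b * γ - μ ≠ 0) (hu₃ : u₃ = a * μ / (b * γ - μ)) :
    u₃ + a = a * b * γ / (b * γ - μ) := by
  rw [hu₃]
  field_simp
  ring

theorem predation_rate_at_equilibrium (ha : a ≠ 0) (hb : b ≠ 0) (hγ : γ ≠ 0)
    (hD : b * γ - μ ≠ 0) (hu₃ : u₃ = a * μ / (b * γ - μ)) :
    b * u₃ / (u₃ + a) = μ / γ := by
  rw [prey_add_at_equilibrium hD hu₃, hu₃]
  field_simp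

theorem logistic_sub_predation_at_equilibrium (hK : K ≠ 0) (ha : a ≠ 0) (hb : b ≠ 0)
    (hγ : γ ≠ 0) (hD : b * γ - μ ≠ 0) (hu₃ : u₃ = a * μ / (b * γ - μ))
    (hv₃ : v₃ = a * α * γ * (b * γ * K - μ * (a + K)) / (K * (b * γ - μ) ^ 2)) :
    α * (1 - 2 * u₃ / K) - a * b * v₃ / (u₃ + a) ^ 2 =
      α * μ * ((b * K * γ - a * μ - K * μ) - a * b * γ) / (K * b * γ * (b * γ - μ)) := by
  rw [prey_add_at_equilibrium hD hu₃, hu₃, hv₃]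
  field_simp
  ring

end equilibrium

/-- Under `bγ > μ`, `bKγ - aμ - Kμ > 0` and `abγ > bKγ - aμ - Kμ`, the 2×2 Jacobian of
the planar predator–prey subsystem at its positive equilibrium `(u₃, v₃)` has negative
trace and positive determinant; consequently every complex eigenvalue has negative real
part: `(u₃, v₃)` is linearly asymptotically stable. -/
theorem planar_equilibrium_stable
    (α K a b γ μ : ℝ)
    (hα : 0 < α) (hK : 0 < K) (ha : 0 < a) (hb : 0 < b)
    (hγ : 0 < γ) (hμ : 0 < μ)
    (h₁ : μ < b * γ)
    (h₂ : 0 < b * K * γ - a * μ - K * μ)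
    (h₃ : b * K * γ - a * μ - K * μ < a * b * γ)
    (u₃ v₃ : ℝ)
    (hu₃ : u₃ = a * μ / (b * γ - μ))
    (hv₃ : v₃ = a * α * γ * (b * γ * K - μ * (a + K)) / (K * (b * γ - μ) ^ 2)) :
    (jacobian2 (planarField α K a b γ μ) ![u₃, v₃]).trace < 0 ∧
    0 < (jacobian2 (planarField α K a b γ μ) ![u₃, v₃]).det ∧
    ∀ z : ℂ,
      (((jacobian2 (planarField α K a b γ μ) ![u₃, v₃]).map ((↑) : ℝ → ℂ))
          - z • (1 : Matrix (Fin 2) (Fin 2) ℂ)).det = 0 → z.re < 0 := by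
  have hD : 0 < b * γ - μ := by linarith
  have hua : 0 < u₃ + a := by rw [hu₃]; positivity
  have hv : 0 < v₃ := by
    have : 0 < b * γ * K - μ * (a + K) := by linarith
    rw [hv₃]; positivity
  have hT : (jacobian2 (planarField α K a b γ μ) ![u₃, v₃]).trace < 0 := by
    rw [jacobian2_planarField hua.ne', Matrix.trace_fin_two_of,
      logistic_sub_predation_at_equilibrium hK.ne' ha.ne' hb.ne' hγ.ne' hD.ne' hu₃ hv₃,
      predation_rate_at_equilibrium ha.ne' hb.ne' hγ.ne' hD.ne' hu₃, mul_div_cancel₀ _ hγ.ne',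
      sub_self, add_zero]
    apply div_neg_of_neg_of_pos
    · exact mul_neg_of_pos_of_neg (by positivity) (by linarith)
    · positivity
  have hDet : 0 < (jacobian2 (planarField α K a b γ μ) ![u₃, v₃]).det := by
    rw [jacobian2_planarField hua.ne', Matrix.det_fin_two_of,
      predation_rate_at_equilibrium ha.ne' hb.ne' hγ.ne' hD.ne' hu₃, mul_div_cancel₀ _ hγ.ne',
      sub_self, mul_zero, zero_sub, neg_mul, neg_neg]
    positivity
  exact ⟨hT, hDet, fun z hz => Matrix.re_neg_of_det_map_ofReal_sub_smul_one_eq_zero hT hDet hz⟩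
end
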